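/- arXiv:0904.1823 — 2 statements merged into one kernel-verified Lean document; each statement's English description precedes it below -/
import Mathlib

section
/- For every strict partition λ of weight n: Σ_{x ∈ X(λ)} h(λ+□(x)) = (n+1) · h(λ). Equivalently, the Plancherel up transition probabilities p∞↑(λ, λ+□(x)) = h(λ+□(x))/(h(λ)(n+1)), x ∈ X(λ), sum to 1. -/
open Finset

/-- A strict partition is encoded as the finite set of its (distinct, positive) parts:
`S` is a strict partition iff `0 ∉ S`. -/
def IsStrictPartition (S : Finset ℕ) : Prop := 0 ∉ S

/-- The weight `|λ|` of a strict partition: the sum of its parts. -/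
def wt (S : Finset ℕ) : ℕ := ∑ a ∈ S, a

/-- The length `ℓ(λ)` of a strict partition: its number of parts. -/
def len (S : Finset ℕ) : ℕ := S.card

/-- The set `X(λ)` of addable contents of the strict partition `λ`:
the contents `x` of boxes that can be added to the shifted Young diagram.
A part `a ∈ S` gives the addable content `a` iff `a + 1` is not a part, and `0` is an
addable content iff `1` is not a part (i.e. `λ` is empty or its smallest part is `≥ 2`). -/
def Xset (S : Finset ℕ) : Finset ℕ :=
  (S.filter (fun x => x + 1 ∉ S)) ∪ (if 1 ∉ S then {0} else ∅)

/-- The set `Y(λ)` of removable contents of the strict partition `λ`: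
`y ∈ Y(λ)` iff `y + 1` is a part and `y` is not a part. -/
def Yset (S : Finset ℕ) : Finset ℕ :=
  (S.filter (fun p => p - 1 ∉ S)).image (fun p => p - 1)

/-- `λ + □(x)`: add to `λ` the box of content `x ∈ X(λ)`. -/
def addBox (S : Finset ℕ) (x : ℕ) : Finset ℕ :=
  if x = 0 then insert 1 S else insert (x + 1) (S.erase x)

/-- `λ − □(y)`: remove from `λ` the box of content `y ∈ Y(λ)`. -/
def removeBox (S : Finset ℕ) (y : ℕ) : Finset ℕ :=
  if y = 0 then S.erase 1 else insert y (S.erase (y + 1))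

/-- `c(c+1)` as a real number. -/
def cc (t : ℕ) : ℝ := t * (t + 1)

/-- The number `h(λ)` of standard shifted tableaux (with the doubled-edge convention):
`h(λ) = 2^{|λ|−ℓ(λ)} |λ|!/(λ_1!⋯λ_ℓ!) ∏_{i<j} (λ_i−λ_j)/(λ_i+λ_j)`. -/
noncomputable def hfun (S : Finset ℕ) : ℝ :=
  2 ^ (wt S - len S) * (Nat.factorial (wt S) : ℝ) / (∏ a ∈ S, (Nat.factorial a : ℝ)) *
    ∏ p ∈ S.offDiag.filter (fun p => p.2 < p.1), (((p.1 : ℝ) - p.2) / ((p.1 : ℝ) + p.2))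

/-- The partial fraction coefficients `θ↑_x(λ)`, `x ∈ X(λ)`. -/
noncomputable def thetaUp (S : Finset ℕ) (xh : ℕ) : ℝ :=
  if xh = 0 then (∏ y ∈ Yset S, cc y) / (∏ x ∈ (Xset S).erase 0, cc x)
  else (∏ y ∈ Yset S, (cc xh - cc y)) /
    (cc xh * ∏ x ∈ ((Xset S).erase 0).erase xh, (cc xh - cc x))

/-- The partial fraction coefficients `θ↓_y(λ)`, `y ∈ Y(λ)`. -/
noncomputable def thetaDown (S : Finset ℕ) (yh : ℕ) : ℝ :=
  (∏ x ∈ (Xset S).erase 0, (cc yh - cc x)) / (∏ y ∈ (Yset S).erase yh, (cc yh - cc y))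

/-- `Z_α(n) = α(α+2)⋯(α+2n−2)`. -/
noncomputable def Zfun (α : ℝ) (n : ℕ) : ℝ := ∏ k ∈ Finset.range n, (α + 2 * k)

/-- The multiplicative measure weight
`M_n^α(λ) = (h(λ)² 2^{ℓ−n}/n!) ⬝ ∏_{□∈λ}(c(□)(c(□)+1)+α) / Z_α(n)`. -/
noncomputable def Mw (α : ℝ) (n : ℕ) (S : Finset ℕ) : ℝ :=
  hfun S ^ 2 * 2 ^ len S / 2 ^ n / (Nat.factorial n : ℝ) *
    (∏ p ∈ S, ∏ c ∈ Finset.range p, (cc c + α)) / Zfun α n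

/-! Adding the box of content `x` multiplies `h(λ)` by `n + 1` times the Lagrange weight, at the
node `x(x+1)`, of the monic polynomial `∏_{b ∈ λ} (X - (b-1)b)` for the `ℓ + 1` nodes `j(j+1)`,
`j ∈ {0} ∪ λ`. Since that polynomial has degree `ℓ`, these weights sum to its leading coefficient `1`;
and the weight at `j` vanishes when `j + 1 ∈ λ`, i.e. exactly at the nodes that are not addable. -/

section PairProducts

variable {α M : Type*} [LinearOrder α] [CommMonoid M]

theorem prod_offDiag_filter_lt (s : Finset α) (f : α → α → M) :
    ∏ p ∈ s.offDiag.filter (fun p => p.2 < p.1), f p.1 p.2 = ∏ a ∈ s, ∏ b ∈ s with b < a, f a b :=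
  prod_finset_product' _ _ _ fun p => by
    simp only [mem_filter, mem_offDiag]
    exact ⟨fun ⟨⟨h1, h2, _⟩, hlt⟩ => ⟨h1, h2, hlt⟩, fun ⟨h1, h2, hlt⟩ => ⟨⟨h1, h2, hlt.ne'⟩, hlt⟩⟩

theorem prod_prod_filter_lt_insert (f : α → α → M) {a : α} {s : Finset α} (ha : a ∉ s) :
    ∏ x ∈ insert a s, ∏ y ∈ insert a s with y < x, f x y =
      (∏ x ∈ s, ∏ y ∈ s with y < x, f x y) * ∏ b ∈ s, if b < a then f a b else f b a := by
  have hrow : ∀ x ∈ s, ∏ y ∈ insert a s with y < x, f x y =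
      (if a < x then f x a else 1) * ∏ y ∈ s with y < x, f x y := by
    intro x _
    rw [filter_insert]
    split_ifs
    · exact prod_insert fun h => ha (mem_filter.mp h).1
    · rw [one_mul]
  rw [prod_insert ha, filter_insert, if_neg (lt_irrefl a), prod_congr rfl hrow,
    prod_mul_distrib, ← mul_assoc, mul_comm, prod_filter, ← prod_mul_distrib]
  congr 1
  refine prod_congr rfl fun b hb => ?_
  have hba : b ≠ a := fun h => ha (h ▸ hb)
  rcases hba.lt_or_gt with h | h
  · simp [h, h.not_gt]
  · simp [h, h.not_gt]

end PairProducts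

theorem cc_strictMono : StrictMono cc := fun s t h => by
  have h' : (s : ℝ) < t := by exact_mod_cast h
  unfold cc
  nlinarith [s.cast_nonneg (α := ℝ)]

theorem len_le_wt {S : Finset ℕ} (h0 : 0 ∉ S) : len S ≤ wt S := by
  rw [len, wt, card_eq_sum_ones]
  exact sum_le_sum fun a ha => Nat.one_le_iff_ne_zero.mpr fun e => h0 (e ▸ ha)

theorem Xset_eq_filter (S : Finset ℕ) : Xset S = (insert 0 S).filter (fun x => x + 1 ∉ S) := by
  ext x
  unfold Xset
  split_ifs with h <;> simp only [mem_union, mem_filter, mem_insert, mem_singleton,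
    notMem_empty] <;> grind

theorem mem_Xset {S : Finset ℕ} {x : ℕ} : x ∈ Xset S ↔ x ∈ insert 0 S ∧ x + 1 ∉ S := by
  rw [Xset_eq_filter, mem_filter]

noncomputable def pairProd (S : Finset ℕ) : ℝ :=
  ∏ p ∈ S.offDiag.filter (fun p => p.2 < p.1), (((p.1 : ℝ) - p.2) / ((p.1 : ℝ) + p.2))

theorem hfun_eq_pairProd (S : Finset ℕ) : hfun S =
    2 ^ (wt S - len S) * (wt S).factorial / (∏ a ∈ S, (a.factorial : ℝ)) * pairProd S := rfl

noncomputable def pairFactor (a b : ℕ) : ℝ :=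
  if b < a then ((a : ℝ) - b) / (a + b) else ((b : ℝ) - a) / (b + a)

theorem pairProd_insert {a : ℕ} {S : Finset ℕ} (ha : a ∉ S) :
    pairProd (insert a S) = pairProd S * ∏ b ∈ S, pairFactor a b := by
  simp only [pairProd, prod_offDiag_filter_lt _ (fun a b : ℕ => ((a : ℝ) - b) / (a + b)),
    prod_prod_filter_lt_insert _ ha, pairFactor]

theorem pairFactor_zero {b : ℕ} (hb : 0 < b) : pairFactor 0 b = 1 := by
  have : (b : ℝ) ≠ 0 := by positivity
  simp [pairFactor, this]

theorem pairFactor_succ {a b : ℕ} (hb : 0 < b) (hba : b ≠ a) :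
    pairFactor (a + 1) b = pairFactor a b * ((cc a - cc (b - 1)) / (cc a - cc b)) := by
  have hnum : cc a - cc (b - 1) = (a + b) * (a + 1 - b) := by
    rw [cc, cc, Nat.cast_sub hb]
    push_cast
    ring
  have hden : cc a - cc b = (a - b) * (a + b + 1) := by
    rw [cc, cc]
    ring
  have hab : (a : ℝ) + b ≠ 0 := by positivity
  have hab1 : (a : ℝ) + b + 1 ≠ 0 := by positivity
  have hab0 : (a : ℝ) - b ≠ 0 := sub_ne_zero.mpr (by exact_mod_cast hba.symm)
  have hba0 : (b : ℝ) - a ≠ 0 := sub_ne_zero.mpr (by exact_mod_cast hba)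
  rw [hnum, hden, pairFactor, pairFactor]
  push_cast
  split_ifs <;> first | omega | field_simp; ring

theorem pairProd_insert_succ {a : ℕ} {T : Finset ℕ} (h0 : 0 ∉ T) (ha : a ∉ T) (ha1 : a + 1 ∉ T) :
    pairProd (insert (a + 1) T) =
      pairProd T * (∏ b ∈ T, pairFactor a b) * ∏ b ∈ T, (cc a - cc (b - 1)) / (cc a - cc b) := by
  rw [pairProd_insert ha1, mul_assoc, ← prod_mul_distrib]
  refine congrArg _ (prod_congr rfl fun b hb => pairFactor_succ (Nat.pos_of_ne_zero ?_) ?_)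
  · rintro rfl
    exact h0 hb
  · rintro rfl
    exact ha hb

noncomputable def upProb (S : Finset ℕ) (x : ℕ) : ℝ :=
  (∏ b ∈ S, (cc x - cc (b - 1))) / ∏ j ∈ (insert 0 S).erase x, (cc x - cc j)

theorem sum_upProb {S : Finset ℕ} (h0 : 0 ∉ S) : ∑ x ∈ insert 0 S, upProb S x = 1 := by
  have hdeg : #(insert 0 S) = (Lagrange.nodal S fun b => cc (b - 1)).degree + 1 := by
    rw [Lagrange.degree_nodal, card_insert_of_notMem h0]
    norm_cast
  have h := Lagrange.leadingCoeff_eq_sum cc_strictMono.injective.injOn hdeg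
  rw [Lagrange.nodal_monic.leadingCoeff] at h
  simp only [Lagrange.eval_nodal] at h
  exact h.symm

theorem upProb_eq_zero {S : Finset ℕ} {x : ℕ} (h : x + 1 ∈ S) : upProb S x = 0 := by
  rw [upProb, prod_eq_zero h (by simp), zero_div]

theorem upProb_zero {S : Finset ℕ} (h0 : 0 ∉ S) :
    upProb S 0 = ∏ b ∈ S, (cc 0 - cc (b - 1)) / (cc 0 - cc b) := by
  rw [upProb, erase_insert h0, prod_div_distrib]

theorem upProb_insert {x : ℕ} {T : Finset ℕ} (h0 : 0 ∉ T) (hx0 : 0 < x) (hx : x ∉ T) :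
    upProb (insert x T) x = 2 / (x + 1) * ∏ b ∈ T, (cc x - cc (b - 1)) / (cc x - cc b) := by
  rw [upProb, insert_comm, erase_insert (by simp [hx, hx0.ne']), prod_insert h0, prod_insert hx,
    prod_div_distrib, mul_div_mul_comm]
  congr 1
  have : (x : ℝ) ≠ 0 := by positivity
  unfold cc
  rw [Nat.cast_sub hx0]
  push_cast
  field_simp
  ring

theorem hfun_insert_succ {x : ℕ} {T : Finset ℕ} (h0 : 0 ∉ T) (hx0 : 0 < x) (hx : x ∉ T)
    (hx1 : x + 1 ∉ T) :
    hfun (insert (x + 1) T) =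
      (wt (insert x T) + 1) * hfun (insert x T) * upProb (insert x T) x := by
  have hle : len (insert x T) ≤ wt (insert x T) := len_le_wt (by simp [hx0.ne, h0])
  have hwt : wt (insert (x + 1) T) = wt (insert x T) + 1 := by
    simp only [wt, sum_insert hx, sum_insert hx1]
    ring
  have hpow : wt (insert (x + 1) T) - len (insert (x + 1) T) =
      wt (insert x T) - len (insert x T) + 1 := by
    simp only [hwt, len, card_insert_of_notMem hx, card_insert_of_notMem hx1] at hle ⊢
    omega
  have : (x : ℝ) + 1 ≠ 0 := by positivity
  rw [hfun_eq_pairProd, hfun_eq_pairProd, hpow, hwt, pairProd_insert_succ h0 hx hx1,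
    pairProd_insert hx, upProb_insert h0 hx0 hx, prod_insert hx, prod_insert hx1, pow_succ,
    Nat.factorial_succ, Nat.factorial_succ x]
  push_cast
  field_simp

theorem hfun_insert_one {S : Finset ℕ} (h0 : 0 ∉ S) (h1 : 1 ∉ S) :
    hfun (insert 1 S) = (wt S + 1) * hfun S * upProb S 0 := by
  have hwt : wt (insert 1 S) = wt S + 1 := by
    simp only [wt, sum_insert h1]
    ring
  have hpow : wt (insert 1 S) - len (insert 1 S) = wt S - len S := by
    rw [hwt, len, len, card_insert_of_notMem h1]
    omega
  have hpair := pairProd_insert_succ h0 h0 h1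
  rw [prod_eq_one fun b hb => pairFactor_zero (Nat.pos_of_ne_zero fun e => h0 (e ▸ hb)),
    mul_one] at hpair
  rw [hfun_eq_pairProd, hfun_eq_pairProd, hpow, hwt, hpair, upProb_zero h0, prod_insert h1,
    Nat.factorial_succ]
  push_cast
  ring

theorem hfun_addBox {S : Finset ℕ} {x : ℕ} (h0 : 0 ∉ S) (hx : x ∈ Xset S) :
    hfun (addBox S x) = (wt S + 1) * hfun S * upProb S x := by
  obtain ⟨hx0S, hx1⟩ := mem_Xset.mp hx
  rcases mem_insert.mp hx0S with rfl | hxS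
  · rw [addBox, if_pos rfl]
    exact hfun_insert_one h0 hx1
  · have hx0 : 0 < x := Nat.pos_of_ne_zero fun e => h0 (e ▸ hxS)
    rw [addBox, if_neg hx0.ne']
    have h := hfun_insert_succ (fun h => h0 (mem_of_mem_erase h)) hx0 (notMem_erase x S)
      (fun h => hx1 (mem_of_mem_erase h))
    rwa [insert_erase hxS] at h

/-- For every strict partition `λ` of weight `n`:
`∑_{x ∈ X(λ)} h(λ+□(x)) = (n+1) ⬝ h(λ)`; equivalently, the Plancherel up transition
probabilities sum to one. -/
theorem sum_plancherel_up (S : Finset ℕ) (hS : IsStrictPartition S)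
    (n : ℕ) (hn : wt S = n) :
    ∑ x ∈ Xset S, hfun (addBox S x) = ((n : ℝ) + 1) * hfun S := by
  subst hn
  calc ∑ x ∈ Xset S, hfun (addBox S x)
      = ∑ x ∈ Xset S, ((wt S : ℝ) + 1) * hfun S * upProb S x :=
        sum_congr rfl fun x hx => hfun_addBox hS hx
    _ = ((wt S : ℝ) + 1) * hfun S * ∑ x ∈ insert 0 S, upProb S x := by
        rw [← mul_sum, Xset_eq_filter, sum_filter_of_ne fun x _ hx => mt upProb_eq_zero hx]
    _ = ((wt S : ℝ) + 1) * hfun S := by rw [sum_upProb hS, mul_one]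
end

section
/- For every strict partition λ = (λ_1 > ⋯ > λ_ℓ > 0), the following identity of polynomials in one variable v holds: ∏_{i=1}^{ℓ} (v − λ_i(λ_i−1)) · ∏_{x ∈ X'(λ)} (v − x(x+1)) = ∏_{i=1}^{ℓ} (v − λ_i(λ_i+1)) · ∏_{y ∈ Y(λ)} (v − y(y+1)). Equivalently, the rational function Φ(v;λ) = ∏_i (v − λ_i(λ_i−1))/(v − λ_i(λ_i+1)) equals ∏_{y∈Y(λ)}(v − y(y+1)) / ∏_{x∈X'(λ)}(v − x(x+1)). -/
open Finset

/-!
Both sides are products of `v - x(x+1)` over the contents `x` with `x ∈ λ` or `x + 1 ∈ λ`,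
split in two ways. On the left, `x + 1 ∈ λ` contributes the factor of the part `x + 1`
(as `(x+1)x = x(x+1)`) and otherwise `x ∈ X'(λ)`; on the right, `x ∈ λ` contributes the
factor of the part `x` and otherwise `x ∈ Y(λ)`.
-/

variable {S : Finset ℕ}

theorem mem_Yset {y : ℕ} : y ∈ Yset S ↔ y + 1 ∈ S ∧ y ∉ S := by
  simp only [Yset, mem_image, mem_filter]
  constructor
  · rintro ⟨p, ⟨hp, hp1⟩, rfl⟩
    -- `p ≠ 0`, since otherwise `p - 1 = p ∈ S`
    obtain ⟨q, rfl⟩ : ∃ q, p = q + 1 := Nat.exists_eq_succ_of_ne_zero (by rintro rfl; exact hp1 hp)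
    exact ⟨hp, hp1⟩
  · rintro ⟨h1, h2⟩
    exact ⟨y + 1, ⟨h1, h2⟩, rfl⟩

theorem Xset_erase_zero (hS : IsStrictPartition S) :
    (Xset S).erase 0 = S.filter (· + 1 ∉ S) := by
  ext x
  by_cases hx : x = 0
  · subst hx
    simpa using fun h => absurd h hS
  · by_cases h1 : 1 ∈ S <;> simp [Xset, hx, h1]

theorem mem_image_pred (hS : IsStrictPartition S) {x : ℕ} :
    x ∈ S.image (· - 1) ↔ x + 1 ∈ S := by
  refine ⟨?_, fun h => mem_image.2 ⟨x + 1, h, rfl⟩⟩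
  intro h
  obtain ⟨a, ha, rfl⟩ := mem_image.1 h
  obtain ⟨b, rfl⟩ : ∃ b, a = b + 1 := Nat.exists_eq_succ_of_ne_zero (by rintro rfl; exact hS ha)
  exact ha

theorem prod_pred_mul_prod_Xset_erase_zero {M : Type*} [CommMonoid M] (f : ℕ → M)
    (hS : IsStrictPartition S) :
    (∏ a ∈ S, f (a - 1)) * ∏ x ∈ (Xset S).erase 0, f x = (∏ a ∈ S, f a) * ∏ y ∈ Yset S, f y := by
  have hpred : Set.InjOn (· - 1) (S : Set ℕ) := fun a ha b hb hab => by
    have : a ≠ 0 := fun h => hS (h ▸ ha)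
    have : b ≠ 0 := fun h => hS (h ▸ hb)
    simp only at hab
    omega
  have hdisj_left : Disjoint (S.image (· - 1)) (S.filter (· + 1 ∉ S)) :=
    disjoint_left.2 fun x hx hx' => (mem_filter.1 hx').2 ((mem_image_pred hS).1 hx)
  have hdisj_right : Disjoint S (Yset S) :=
    disjoint_left.2 fun x hx hy => (mem_Yset.1 hy).2 hx
  have hunion : S.image (· - 1) ∪ S.filter (· + 1 ∉ S) = S ∪ Yset S := by
    ext x
    simp only [mem_union, mem_filter, mem_image_pred hS, mem_Yset]
    tauto
  rw [← prod_image hpred, Xset_erase_zero hS, ← prod_union hdisj_left, ← prod_union hdisj_right,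
    hunion]

theorem cc_sub_one {a : ℕ} (ha : a ≠ 0) : cc (a - 1) = (a : ℝ) * ((a : ℝ) - 1) := by
  obtain ⟨b, rfl⟩ := Nat.exists_eq_succ_of_ne_zero ha
  simp only [cc, Nat.succ_sub_one, Nat.cast_succ]
  ring

/-- **Proposition 3.6.** For every strict partition `λ`, as polynomials in `v`:
`∏_i (v − λ_i(λ_i−1)) ⬝ ∏_{x∈X'(λ)} (v − x(x+1))
  = ∏_i (v − λ_i(λ_i+1)) ⬝ ∏_{y∈Y(λ)} (v − y(y+1))`,
i.e. `Φ(v;λ) = ∏_{y∈Y(λ)}(v−y(y+1)) / ∏_{x∈X'(λ)}(v−x(x+1))`. -/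
theorem phi_factorization (S : Finset ℕ) (hS : IsStrictPartition S) (v : ℝ) :
    (∏ a ∈ S, (v - (a : ℝ) * ((a : ℝ) - 1))) * (∏ x ∈ (Xset S).erase 0, (v - cc x)) =
      (∏ a ∈ S, (v - cc a)) * (∏ y ∈ Yset S, (v - cc y)) := by
  have hshift : ∏ a ∈ S, (v - (a : ℝ) * ((a : ℝ) - 1)) = ∏ a ∈ S, (v - cc (a - 1)) :=
    prod_congr rfl fun a ha => by rw [← cc_sub_one fun h => hS (h ▸ ha)]
  rw [hshift]
  exact prod_pred_mul_prod_Xset_erase_zero (fun x => v - cc x) hS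
end
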